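/- Let (X,r) be a non-degenerate involutive set-theoretic solution to the Yang–Baxter equation, and let k: X → X be a map. Define t(x,y) = σ_{σ_x(y)}(k(τ_y(x))). Then k is a reflection of (X,r) if and only if t(x,y) = t(x,k(y)) for all x,y ∈ X. -/
import Mathlib


/-- `r × id` acting on triples. -/
def r1map {X : Type*} (r : X × X → X × X) : X × X × X → X × X × X :=
  fun p => ((r (p.1, p.2.1)).1, (r (p.1, p.2.1)).2, p.2.2)

/-- `id × r` acting on triples. -/
def r2map {X : Type*} (r : X × X → X × X) : X × X × X → X × X × X :=
  fun p => (p.1, r p.2)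

/-- `id × k` on pairs. -/
def k2map {X : Type*} (k : X → X) : X × X → X × X := fun p => (p.1, k p.2)

/-- `k × id` on pairs. -/
def k1map {X : Type*} (k : X → X) : X × X → X × X := fun p => (k p.1, p.2)

/-- Theorem 1.7: for an involutive non-degenerate solution, k is a reflection
iff t(x,y) = t(x,k(y)) for all x,y, where t(x,y) = σ_{σ_x(y)}(k(τ_y(x))). -/
theorem statement2 {X : Type*} (σ τ : X → X ≃ X) (k : X → X)
    (r : X × X → X × X) (hr : ∀ x y, r (x, y) = (σ x y, τ y x))
    (hbraid : r1map r ∘ r2map r ∘ r1map r = r2map r ∘ r1map r ∘ r2map r)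
    (hinv : r ∘ r = id) :
    (r ∘ k2map k ∘ r ∘ k2map k = k2map k ∘ r ∘ k2map k ∘ r) ↔
      (∀ x y : X, σ (σ x y) (k (τ y x)) = σ (σ x (k y)) (k (τ (k y) x))) := by
  have hσ : ∀ x y : X, σ (σ x y) (τ y x) = x := by
    intro x y
    have h := congrFun hinv (x, y)
    simp only [Function.comp_apply, hr, id_eq, Prod.mk.injEq] at h
    exact h.1
  have hτ : ∀ x y : X, τ (τ y x) (σ x y) = y := by
    intro x y
    have h := congrFun hinv (x, y)
    simp only [Function.comp_apply, hr, id_eq, Prod.mk.injEq] at h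
    exact h.2
  constructor
  · intro h x y
    have h1 := congrFun h (x, y)
    simp only [Function.comp_apply, k2map, hr, Prod.mk.injEq] at h1
    exact h1.1.symm
  · intro ht
    funext p
    obtain ⟨x, y⟩ := p
    simp only [Function.comp_apply, k2map, hr, Prod.mk.injEq]
    refine ⟨(ht x y).symm, ?_⟩
    -- goal: τ (k (τ (k y) x)) (σ x (k y)) = k (τ (k (τ y x)) (σ x y))
    set a := σ x y with ha
    set b := τ y x with hb
    set a' := σ x (k y) with ha'
    set b' := τ (k y) x with hb'
    -- c := σ a (k b) = σ a' (k b')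
    have hcc : σ a (k b) = σ a' (k b') := ht x y
    -- involutivity at (a, k b) and (a', k b')
    have h1 : σ (σ a (k b)) (τ (k b) a) = a := hσ a (k b)
    have h2 : σ (σ a' (k b')) (τ (k b') a') = a' := hσ a' (k b')
    -- ht at (a, b): note σ a b = x, τ b a = y
    have hab : σ a b = x := hσ x y
    have hba : τ b a = y := hτ x y
    have h3 : σ (σ a b) (k (τ b a)) = σ (σ a (k b)) (k (τ (k b) a)) := ht a b
    rw [hab, hba] at h3
    -- h3 : σ x (k y) = σ (σ a (k b)) (k (τ (k b) a)), i.e. a' = ...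
    have h4 : σ (σ a' (k b')) (τ (k b') a') = σ (σ a' (k b')) (k (τ (k b) a)) := by
      rw [h2, ← hcc, ← h3]
    exact (σ (σ a' (k b'))).injective h4
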